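/- arXiv:2604.19592 — 7 statements merged into one kernel-verified Lean document; each statement's English description precedes it below -/
import Mathlib

section
/- Let $\mathcal{Y} \subseteq \mathbb{R}^d$ be a set, $T \geq 1$, and for each $t \in [T]$ let $\mathcal{D}_t$ be a finitely supported probability distribution on $\mathcal{Y}$, $x_t$ a context, $y_t \in \mathcal{Y}$, $h_t : \mathcal{X} \times \mathcal{Y} \to \mathbb{R}^d$, and $\epsilon_t \geq 0$. Suppose each $\mathcal{D}_t$ satisfies the EVI guarantee: for all $y \in \mathcal{Y}$, $\mathbb{E}_{p \sim \mathcal{D}_t}[h_t(x_t,p)^\top(y-p)] \leq \epsilon_t$. Then for any test function $h : \mathcal{X} \times \mathcal{Y} \to \mathbb{R}^d$, the multicalibration error satisfies $\sum_{t=1}^T \mathbb{E}_{p_t \sim \mathcal{D}_t}[h(x_t,p_t)^\top(y_t-p_t)] \leq \mathrm{Regret}_T(h) + \sum_{t=1}^T \epsilon_t$, where $\mathrm{Regret}_T(h) = \sum_{t=1}^T (f_t(h_t) - f_t(h))$ and $f_t(g) = -\mathbb{E}_{p \sim \mathcal{D}_t}[g(x_t,p)^\top(y_t-p)]$. -/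
open Finset Matrix

/-- GGM-style reduction from online learning to online multicalibration:
if each forecast distribution `𝒟ₜ` (weights `w t`, atoms `P t`) solves the EVI for the
test `hseq t` picked by the no-regret learner to precision `ε t`, then the
multicalibration error with respect to any test `h` is at most the learner's
regret against `h` plus the cumulative EVI error. -/
theorem stmt0 {d T m : ℕ} {X : Type*} (hT : 1 ≤ T)
    (Y : Set (Fin d → ℝ))
    (w : Fin T → Fin m → ℝ) (P : Fin T → Fin m → (Fin d → ℝ))
    (hw0 : ∀ t j, 0 ≤ w t j) (hw1 : ∀ t, ∑ j, w t j = 1)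
    (hP : ∀ t j, P t j ∈ Y)
    (x : Fin T → X) (y : Fin T → (Fin d → ℝ)) (hy : ∀ t, y t ∈ Y)
    (hseq : Fin T → X → (Fin d → ℝ) → (Fin d → ℝ))
    (ε : Fin T → ℝ) (hε : ∀ t, 0 ≤ ε t)
    (hEVI : ∀ t, ∀ yy ∈ Y, ∑ j, w t j * (hseq t (x t) (P t j) ⬝ᵥ (yy - P t j)) ≤ ε t)
    (h : X → (Fin d → ℝ) → (Fin d → ℝ)) :
    ∑ t, ∑ j, w t j * (h (x t) (P t j) ⬝ᵥ (y t - P t j)) ≤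
      (∑ t, ((-(∑ j, w t j * (hseq t (x t) (P t j) ⬝ᵥ (y t - P t j)))) -
             (-(∑ j, w t j * (h (x t) (P t j) ⬝ᵥ (y t - P t j)))))) + ∑ t, ε t := by
  have key : ∀ t, ∑ j, w t j * (hseq t (x t) (P t j) ⬝ᵥ (y t - P t j)) ≤ ε t :=
    fun t => hEVI t (y t) (hy t)
  have : ∑ t, ∑ j, w t j * (hseq t (x t) (P t j) ⬝ᵥ (y t - P t j)) ≤ ∑ t, ε t :=
    Finset.sum_le_sum fun t _ => key t
  linarith [Finset.sum_sub_distrib (s := Finset.univ)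
    (f := fun t => -(∑ j, w t j * (hseq t (x t) (P t j) ⬝ᵥ (y t - P t j))))
    (g := fun t => -(∑ j, w t j * (h (x t) (P t j) ⬝ᵥ (y t - P t j)))),
    Finset.sum_neg_distrib (s := Finset.univ)
    (f := fun t => ∑ j, w t j * (hseq t (x t) (P t j) ⬝ᵥ (y t - P t j))),
    Finset.sum_neg_distrib (s := Finset.univ)
    (f := fun t => ∑ j, w t j * (h (x t) (P t j) ⬝ᵥ (y t - P t j)))]
end

section
/- Let $\mathcal{Z} \subseteq \mathbb{R}^d$ be a nonempty compact set, $\mathcal{L} \subseteq \mathbb{R}^d$ a set of loss vectors, and $\Phi$ a set of maps $\phi : \mathcal{Z} \to \mathcal{Z}$. Let $\sigma : \mathbb{R}^d \to \mathcal{Z}$ be a best-response map, i.e., for every $p$, $\sigma(p) \in \mathcal{Z}$ and $p^\top \sigma(p) \leq p^\top z$ for all $z \in \mathcal{Z}$. For $\phi \in \Phi$ define $h_\phi(p) = \sigma(p) - \phi(\sigma(p))$. Fix $T \geq 1$, finitely supported distributions $\mathcal{D}_1,\dots,\mathcal{D}_T$ on $\mathcal{L}$ (forecast distributions), losses $\ell_1,\dots,\ell_T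 \in \mathcal{L}$, and let $\mu_t$ be the pushforward of $\mathcal{D}_t$ under $\sigma$. Then for every $\phi \in \Phi$: $\sum_{t=1}^T \mathbb{E}_{z_t \sim \mu_t}[\ell_t^\top(z_t - \phi(z_t))] \leq \sum_{t=1}^T \mathbb{E}_{p_t \sim \mathcal{D}_t}[h_\phi(p_t)^\top(\ell_t - p_t)]$. -/
open Finset Matrix

/-- Reduction from multicalibrated forecasting to Φ-regret: best responding to
forecast distributions `𝒟ₜ` (weights `w t`, atoms `P t` in the loss set) gives,
for each deviation `φ ∈ Φ`, Φ-regret bounded by the multicalibration error of the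
forecaster with respect to the test `h_φ(p) = σ(p) - φ(σ(p))`. -/
theorem stmt1 {d T m : ℕ}
    (Z : Set (Fin d → ℝ)) (hZne : Z.Nonempty) (hZc : IsCompact Z)
    (L : Set (Fin d → ℝ))
    (Φ : Set ((Fin d → ℝ) → (Fin d → ℝ)))
    (hΦ : ∀ φ ∈ Φ, ∀ z ∈ Z, φ z ∈ Z)
    (σ : (Fin d → ℝ) → (Fin d → ℝ))
    (hσZ : ∀ p, σ p ∈ Z)
    (hσmin : ∀ p, ∀ z ∈ Z, p ⬝ᵥ σ p ≤ p ⬝ᵥ z)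
    (w : Fin T → Fin m → ℝ) (P : Fin T → Fin m → (Fin d → ℝ))
    (hw0 : ∀ t j, 0 ≤ w t j) (hw1 : ∀ t, ∑ j, w t j = 1)
    (hP : ∀ t j, P t j ∈ L)
    (ℓ : Fin T → (Fin d → ℝ)) (hℓ : ∀ t, ℓ t ∈ L) :
    ∀ φ ∈ Φ,
      ∑ t, ∑ j, w t j * (ℓ t ⬝ᵥ (σ (P t j) - φ (σ (P t j)))) ≤
      ∑ t, ∑ j, w t j * ((σ (P t j) - φ (σ (P t j))) ⬝ᵥ (ℓ t - P t j)) := by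
  intro φ hφ
  refine Finset.sum_le_sum fun t _ => Finset.sum_le_sum fun j _ => ?_
  have hp : P t j ⬝ᵥ σ (P t j) - P t j ⬝ᵥ φ (σ (P t j)) ≤ 0 := by
    have := hσmin (P t j) (φ (σ (P t j))) (hΦ φ hφ _ (hσZ (P t j)))
    linarith
  have key : ℓ t ⬝ᵥ (σ (P t j) - φ (σ (P t j))) ≤
      (σ (P t j) - φ (σ (P t j))) ⬝ᵥ (ℓ t - P t j) := by
    simp only [dotProduct_sub, sub_dotProduct]
    have h1 : ℓ t ⬝ᵥ σ (P t j) = σ (P t j) ⬝ᵥ ℓ t := dotProduct_comm _ _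
    have h2 : ℓ t ⬝ᵥ φ (σ (P t j)) = φ (σ (P t j)) ⬝ᵥ ℓ t := dotProduct_comm _ _
    have h3 : σ (P t j) ⬝ᵥ P t j = P t j ⬝ᵥ σ (P t j) := dotProduct_comm _ _
    have h4 : φ (σ (P t j)) ⬝ᵥ P t j = P t j ⬝ᵥ φ (σ (P t j)) := dotProduct_comm _ _
    linarith
  exact mul_le_mul_of_nonneg_left key (hw0 t j)
end

section
/- Let $\mathcal{Y} \subseteq \mathbb{R}^d$, $x \in \mathcal{X}$ fixed, $h : \mathcal{X} \times \mathcal{Y} \to \mathbb{R}^d$, and suppose for each $t \in [T]$ a finitely supported distribution $\mathcal{D}_t$ on $\mathcal{Y}$ is given, and outcomes are chosen adversarially as $y_t \in \argmax_{\hat y \in \mathcal{Y}} \hat y^\top \mathbb{E}_{p \sim \mathcal{D}_t}[h(x,p)]$ (assume such maximizers exist). If the multicalibration bound $\sum_{t=1}^T \mathbb{E}_{p_t \sim \mathcal{D}_t}[h(x,p_t)^\top(y_t - p_t)] \leq E_T$ holds, then for every fixed $y_\star \in \mathcal{Y}$, the uniform mixture $\mathcal{D} = \frac{1}{T}\sum_{t=1}^T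 \mathcal{D}_t$ satisfies $\mathbb{E}_{p \sim \mathcal{D}}[h(x,p)^\top(y_\star - p)] \leq E_T / T$. -/
open Finset Matrix

/-- Converse direction (multicalibration ⟹ EVI solving): if outcomes are chosen
adversarially as best responses to the expected test values, then the uniform
mixture of the forecast distributions is an `E_T/T`-approximate EVI solution
for the operator `h(x, ·)`. -/
theorem stmt3 {d T m : ℕ} {X : Type*} (hT : 1 ≤ T)
    (Y : Set (Fin d → ℝ)) (x : X)
    (h : X → (Fin d → ℝ) → (Fin d → ℝ))
    (w : Fin T → Fin m → ℝ) (P : Fin T → Fin m → (Fin d → ℝ))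
    (hw0 : ∀ t j, 0 ≤ w t j) (hw1 : ∀ t, ∑ j, w t j = 1)
    (hP : ∀ t j, P t j ∈ Y)
    (y : Fin T → (Fin d → ℝ)) (hy : ∀ t, y t ∈ Y)
    (hbr : ∀ t, ∀ yhat ∈ Y, yhat ⬝ᵥ (∑ j, w t j • h x (P t j)) ≤
        y t ⬝ᵥ (∑ j, w t j • h x (P t j)))
    (E : ℝ)
    (hMC : ∑ t, ∑ j, w t j * (h x (P t j) ⬝ᵥ (y t - P t j)) ≤ E) :
    ∀ ystar ∈ Y,
      (1 / (T : ℝ)) * ∑ t, ∑ j, w t j * (h x (P t j) ⬝ᵥ (ystar - P t j)) ≤ E / T := by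
  intro ystar hstar
  have hTpos : (0:ℝ) < T := by exact_mod_cast hT
  have key : ∀ t : Fin T, ∑ j, w t j * (h x (P t j) ⬝ᵥ (ystar - P t j)) ≤
      ∑ j, w t j * (h x (P t j) ⬝ᵥ (y t - P t j)) := by
    intro t
    have hb := hbr t ystar hstar
    have e1 : ∀ z : Fin d → ℝ, z ⬝ᵥ (∑ j, w t j • h x (P t j)) =
        ∑ j, w t j * (h x (P t j) ⬝ᵥ z) := by
      intro z
      simp [dotProduct, Finset.mul_sum, Finset.sum_comm (γ := Fin m)]
      refine Finset.sum_congr rfl fun j _ => Finset.sum_congr rfl fun i _ => by ring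
    rw [e1, e1] at hb
    have : ∀ j, w t j * (h x (P t j) ⬝ᵥ (ystar - P t j)) =
        w t j * (h x (P t j) ⬝ᵥ ystar) - w t j * (h x (P t j) ⬝ᵥ P t j) := by
      intro j; rw [dotProduct_sub]; ring
    simp_rw [this, dotProduct_sub, mul_sub, Finset.sum_sub_distrib]
    exact sub_le_sub_right hb _
  have hsum : ∑ t, ∑ j, w t j * (h x (P t j) ⬝ᵥ (ystar - P t j)) ≤ E :=
    le_trans (Finset.sum_le_sum fun t _ => key t) hMC
  rw [div_eq_mul_inv E, mul_comm E, ← one_div]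
  exact mul_le_mul_of_nonneg_left hsum (by positivity)
end

section
/- Let $\mathcal{Y} \subseteq \mathbb{R}^d$ be a nonempty compact convex set and $S : \mathcal{Y} \to \mathbb{R}^d$ a bounded function. Then for every $\epsilon > 0$ there exists a finitely supported probability distribution $\mathcal{D}$ on $\mathcal{Y}$ such that $\mathbb{E}_{p \sim \mathcal{D}}[S(p)^\top(y - p)] \leq \epsilon$ for all $y \in \mathcal{Y}$. -/
open Finset Matrix

open RealInnerProductSpace in
private lemma evi_exists_proj {d : ℕ} {Y : Set (EuclideanSpace ℝ (Fin d))} (hne : Y.Nonempty)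
    (hc : IsCompact Y) (hconv : Convex ℝ Y) (x : EuclideanSpace ℝ (Fin d)) :
    ∃ v ∈ Y, ∀ w ∈ Y, ⟪x - v, w - v⟫ ≤ 0 := by
  obtain ⟨v, hv, heq⟩ := exists_norm_eq_iInf_of_complete_convex hne hc.isComplete hconv x
  exact ⟨v, hv, (norm_eq_iInf_iff_real_inner_le_zero hconv hv).1 heq⟩

open RealInnerProductSpace in
private lemma evi_proj_contract {F : Type*} [NormedAddCommGroup F] [InnerProductSpace ℝ F]
    {x v y : F} (h : ⟪x - v, y - v⟫ ≤ 0) : ‖v - y‖ ^ 2 ≤ ‖x - y‖ ^ 2 := by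
  have hxy : x - y = (x - v) + (v - y) := by abel
  rw [hxy, norm_add_sq_real]
  have h2 : (0:ℝ) ≤ ⟪x - v, v - y⟫ := by
    have hvy : v - y = -(y - v) := by abel
    rw [hvy, inner_neg_right]; linarith
  nlinarith [sq_nonneg ‖x - v‖]

open RealInnerProductSpace in
private lemma evi_dot_eq_inner {d : ℕ} (x y : Fin d → ℝ) :
    x ⬝ᵥ y = ⟪(WithLp.equiv 2 (Fin d → ℝ)).symm x, (WithLp.equiv 2 (Fin d → ℝ)).symm y⟫ := by
  simp [PiLp.inner_apply, dotProduct, mul_comm]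

open RealInnerProductSpace

/-- Existence of approximate EVI solutions: for any nonempty compact convex
`Y ⊆ ℝ^d` and any bounded (possibly discontinuous, non-monotone) operator `S`,
for every `ε > 0` there is a finitely supported distribution `𝒟` on `Y` with
`𝔼_{p ∼ 𝒟}[S(p)ᵀ(y - p)] ≤ ε` for all `y ∈ Y`. -/
theorem stmt4 {d : ℕ}
    (Y : Set (Fin d → ℝ)) (hne : Y.Nonempty) (hc : IsCompact Y) (hconv : Convex ℝ Y)
    (S : (Fin d → ℝ) → (Fin d → ℝ)) (B : ℝ)
    (hS : ∀ p ∈ Y, ∀ i, |S p i| ≤ B) :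
    ∀ ε > 0, ∃ (m : ℕ) (w : Fin m → ℝ) (P : Fin m → (Fin d → ℝ)),
      (∀ j, 0 ≤ w j) ∧ (∑ j, w j = 1) ∧ (∀ j, P j ∈ Y) ∧
      ∀ y ∈ Y, ∑ j, w j * (S (P j) ⬝ᵥ (y - P j)) ≤ ε := by
  intro ε hε
  set E := EuclideanSpace ℝ (Fin d) with hE
  let eqv := WithLp.equiv 2 (Fin d → ℝ)
  let Y' : Set E := eqv ⁻¹' Y
  have hne' : Y'.Nonempty := ⟨eqv.symm hne.some, hne.some_mem⟩
  have hc' : IsCompact Y' := (PiLp.homeomorph 2 (fun _ : Fin d => ℝ)).isCompact_preimage.2 hc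
  have hconv' : Convex ℝ Y' := hconv.linear_preimage (WithLp.linearEquiv 2 ℝ (Fin d → ℝ)).toLinearMap
  let S' : E → E := fun q => eqv.symm (S (eqv q))
  -- diameter bound
  obtain ⟨D, hD⟩ := Metric.isBounded_iff.1 hc'.isBounded
  obtain ⟨p0, hp0⟩ := hne'
  have hne2 : Y'.Nonempty := ⟨p0, hp0⟩
  have hD0 : 0 ≤ D := le_trans (by simp) (hD hp0 hp0)
  -- gradient bound
  set Gsq : ℝ := (d : ℝ) * B ^ 2 with hGsq
  have hGsq0 : 0 ≤ Gsq := by positivity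
  have hG : ∀ q ∈ Y', ‖S' q‖ ^ 2 ≤ Gsq := by
    intro q hq
    rw [← real_inner_self_eq_norm_sq]
    have h0 : ⟪S' q, S' q⟫ = ∑ i : Fin d, S (eqv q) i * S (eqv q) i :=
      (evi_dot_eq_inner (S (eqv q)) (S (eqv q))).symm.trans (by simp [dotProduct])
    rw [h0]
    calc ∑ i : Fin d, S (eqv q) i * S (eqv q) i
        ≤ ∑ _i : Fin d, B ^ 2 := by
          apply Finset.sum_le_sum
          intro i _
          have h1 := hS (eqv q) hq i
          nlinarith [abs_nonneg (S (eqv q) i), abs_mul_abs_self (S (eqv q) i)]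
      _ = (d : ℝ) * B ^ 2 := by simp [mul_comm]
  -- step size and horizon
  set η : ℝ := ε / (Gsq + 1) with hη
  have hη0 : 0 < η := by positivity
  have hηG : η * Gsq ≤ ε := by
    rw [hη, div_mul_eq_mul_div, div_le_iff₀ (by linarith)]
    nlinarith
  set T : ℕ := ⌈D ^ 2 / (η * ε)⌉₊ + 1 with hT
  have hT1 : 1 ≤ T := Nat.le_add_left 1 _
  have hTpos : (0:ℝ) < (T:ℝ) := by positivity
  have hDT : D ^ 2 ≤ (T:ℝ) * (η * ε) := by
    have h1 : D ^ 2 / (η * ε) ≤ (T:ℝ) := le_trans (Nat.le_ceil _) (by exact_mod_cast Nat.le_succ _)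
    calc D ^ 2 = (D ^ 2 / (η * ε)) * (η * ε) := by field_simp
      _ ≤ (T:ℝ) * (η * ε) := by
          apply mul_le_mul_of_nonneg_right h1 (by positivity)
  -- projection and iterates
  let pr : E → E := fun x => (evi_exists_proj hne2 hc' hconv' x).choose
  have hpr : ∀ x : E, pr x ∈ Y' ∧ ∀ w ∈ Y', ⟪x - pr x, w - pr x⟫ ≤ 0 := by
    intro x
    obtain ⟨h1, h2⟩ := (evi_exists_proj hne2 hc' hconv' x).choose_spec
    exact ⟨h1, h2⟩
  let p : ℕ → E := fun n => Nat.rec p0 (fun _ q => pr (q + η • S' q)) n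
  have hpsucc : ∀ n, p (n + 1) = pr (p n + η • S' (p n)) := fun n => rfl
  have hmem : ∀ n, p n ∈ Y' := by
    intro n
    induction n with
    | zero => exact hp0
    | succ n _ => exact (hpr _).1
  -- one-step regret inequality
  have hstep : ∀ y ∈ Y', ∀ n, 2 * η * ⟪S' (p n), y - p n⟫ ≤
      ‖p n - y‖ ^ 2 - ‖p (n + 1) - y‖ ^ 2 + η ^ 2 * Gsq := by
    intro y hy n
    set g : E := S' (p n) with hg
    set x : E := p n + η • g with hx
    have hcontr : ‖p (n + 1) - y‖ ^ 2 ≤ ‖x - y‖ ^ 2 := by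
      rw [hpsucc]
      exact evi_proj_contract ((hpr x).2 y hy)
    have hexp : ‖x - y‖ ^ 2 = ‖p n - y‖ ^ 2 + 2 * (η * ⟪p n - y, g⟫) + η ^ 2 * ‖g‖ ^ 2 := by
      have : x - y = (p n - y) + η • g := by rw [hx]; abel
      rw [this, norm_add_sq_real, real_inner_smul_right, norm_smul]
      rw [mul_pow]
      simp [Real.norm_eq_abs, sq_abs]
    have hinner : ⟪p n - y, g⟫ = -⟪g, y - p n⟫ := by
      rw [real_inner_comm]
      have : p n - y = -(y - p n) := by abel
      rw [this, inner_neg_right]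
    have hgB : ‖g‖ ^ 2 ≤ Gsq := hG (p n) (hmem n)
    have hη2 : (0:ℝ) ≤ η ^ 2 := sq_nonneg η
    nlinarith [hcontr, hexp]
  -- summed regret
  have hsum : ∀ y ∈ Y', ∀ n, 2 * η * (∑ s ∈ Finset.range n, ⟪S' (p s), y - p s⟫) ≤
      ‖p 0 - y‖ ^ 2 - ‖p n - y‖ ^ 2 + (n : ℝ) * (η ^ 2 * Gsq) := by
    intro y hy n
    induction n with
    | zero => simp
    | succ n ih =>
      rw [Finset.sum_range_succ, mul_add]
      have h1 := hstep y hy n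
      push_cast
      push_cast at ih
      linarith
  -- assemble the distribution
  refine ⟨T, fun _ => (T:ℝ)⁻¹, fun j => eqv (p j), ?_, ?_, ?_, ?_⟩
  · intro j; positivity
  · simp [Finset.card_univ]
  · intro j; exact hmem j
  · intro y hy
    have hy' : (eqv.symm y) ∈ Y' := hy
    have hdot : ∀ j : Fin T, S (eqv (p j)) ⬝ᵥ (y - eqv (p j)) = ⟪S' (p j), eqv.symm y - p j⟫ := by
      intro j
      rw [evi_dot_eq_inner]
      congr 1
    have hrw : ∑ j : Fin T, (T:ℝ)⁻¹ * (S (eqv (p j)) ⬝ᵥ (y - eqv (p j)))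
        = (T:ℝ)⁻¹ * ∑ s ∈ Finset.range T, ⟪S' (p s), eqv.symm y - p s⟫ := by
      rw [Finset.mul_sum,
        ← Fin.sum_univ_eq_sum_range (fun s => (T:ℝ)⁻¹ * ⟪S' (p s), eqv.symm y - p s⟫) T]
      exact Finset.sum_congr rfl (fun j _ => by rw [hdot])
    rw [hrw]
    have hB := hsum (eqv.symm y) hy' T
    have hnorm : ‖p 0 - eqv.symm y‖ ^ 2 ≤ D ^ 2 := by
      have h1 : dist (p 0) (eqv.symm y) ≤ D := hD hp0 hy'
      have h2 : ‖p 0 - eqv.symm y‖ = dist (p 0) (eqv.symm y) := (dist_eq_norm _ _).symm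
      nlinarith [dist_nonneg (x := p 0) (y := eqv.symm y)]
    have hT2 : (0:ℝ) ≤ ‖p T - eqv.symm y‖ ^ 2 := sq_nonneg _
    have hSig : 2 * η * (∑ s ∈ Finset.range T, ⟪S' (p s), eqv.symm y - p s⟫)
        ≤ D ^ 2 + (T:ℝ) * (η ^ 2 * Gsq) := by linarith
    have hfin : (∑ s ∈ Finset.range T, ⟪S' (p s), eqv.symm y - p s⟫) ≤ (T:ℝ) * ε := by
      have h3 : D ^ 2 + (T:ℝ) * (η ^ 2 * Gsq) ≤ (T:ℝ) * (η * ε) + (T:ℝ) * (η * ε) := by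
        have : (T:ℝ) * (η ^ 2 * Gsq) ≤ (T:ℝ) * (η * ε) := by
          have := mul_le_mul_of_nonneg_left hηG (le_of_lt hη0)
          have h4 : η ^ 2 * Gsq ≤ η * ε := by nlinarith
          exact mul_le_mul_of_nonneg_left h4 (le_of_lt hTpos)
        linarith
      have h5 : 2 * η * (∑ s ∈ Finset.range T, ⟪S' (p s), eqv.symm y - p s⟫)
          ≤ 2 * η * ((T:ℝ) * ε) := by linarith
      exact le_of_mul_le_mul_left (by linarith) (by linarith : (0:ℝ) < 2 * η)
    calc (T:ℝ)⁻¹ * ∑ s ∈ Finset.range T, ⟪S' (p s), eqv.symm y - p s⟫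
        ≤ (T:ℝ)⁻¹ * ((T:ℝ) * ε) := by
          apply mul_le_mul_of_nonneg_left hfin (by positivity)
      _ = ε := by field_simp
end

section
/- Let $\Psi : \mathcal{X} \times \mathcal{Y} \to \mathbb{R}^{r \times d}$ be a feature map, $B > 0$, and consider losses $\ell_t = \mathbb{E}_{p_t \sim \mathcal{D}_t}[\Psi(x_t,p_t)(y_t - p_t)] \in \mathbb{R}^r$ for finitely supported distributions $\mathcal{D}_t$ on $\mathcal{Y}$ and outcomes $y_t \in \mathcal{Y}$. Suppose an online algorithm produces iterates $\theta_t \in \mathbb{R}^r$ with $\|\theta_t\|_2 \leq B$ satisfying the linear regret bound $\sum_{t=1}^T \ell_t^\top \theta - \sum_{t=1}^T \ell_t^\top \theta_t \leq 2B\sqrt{\sum_{t=1}^T \|\ell_t\|_2^2}$ for all $\|\theta\|_2 \leq B$, and that each $\mathcal{D}_t$ solves the EVI for the operator $p \mapsto \Psi(x_t,p)^\top \theta_t$ to precision $\epsilon_t$ with $\sum_{t=1}^T \epsilon_t \leq 1$. Then for every $\theta$ with $\|\theta\|_2 \leq B$, the test function $h_\theta(x,p) = \Psi(x,p)^\top \theta$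 satisfies $\sum_{t=1}^T \mathbb{E}_{p_t \sim \mathcal{D}_t}[h_\theta(x_t,p_t)^\top(y_t - p_t)] \leq 2B\sqrt{\sum_{t=1}^T \|\mathbb{E}_{p_t \sim \mathcal{D}_t}[\Psi(x_t,p_t)(y_t-p_t)]\|_2^2} + 1$. -/
open Finset Matrix

/-- Euclidean norm of a vector in `ℝ^r`. -/
noncomputable def nrm {r : ℕ} (v : Fin r → ℝ) : ℝ := Real.sqrt (∑ i, v i ^ 2)


private lemma key_stmt6 {r d : ℕ} (M : Matrix (Fin r) (Fin d) ℝ) (θ : Fin r → ℝ) (v : Fin d → ℝ) :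
    M.transpose.mulVec θ ⬝ᵥ v = M.mulVec v ⬝ᵥ θ := by
  simp only [dotProduct, Matrix.mulVec, Matrix.transpose_apply,
    Finset.sum_mul, Finset.mul_sum]
  rw [Finset.sum_comm]
  apply Finset.sum_congr rfl; intros; apply Finset.sum_congr rfl; intros; ring

private lemma swap_stmt6 {r d m : ℕ} (w : Fin m → ℝ) (M : Fin m → Matrix (Fin r) (Fin d) ℝ)
    (v : Fin m → (Fin d → ℝ)) (θ : Fin r → ℝ) :
    (∑ j, w j • (M j).mulVec (v j)) ⬝ᵥ θ = ∑ j, w j * ((M j).transpose.mulVec θ ⬝ᵥ v j) := by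
  simp only [dotProduct, Finset.sum_apply, Pi.smul_apply, smul_eq_mul,
    Finset.sum_mul, Finset.mul_sum]
  rw [Finset.sum_comm]
  refine Finset.sum_congr rfl fun j _ => ?_
  have h1 : ∑ i, w j * (M j *ᵥ v j) i * θ i = w j * (M j *ᵥ v j ⬝ᵥ θ) := by
    rw [dotProduct, Finset.mul_sum]; exact Finset.sum_congr rfl fun i _ => by ring
  have h2 : ∑ i, w j * (((M j)ᵀ *ᵥ θ) i * v j i) = w j * ((M j)ᵀ *ᵥ θ ⬝ᵥ v j) := by
    rw [dotProduct, Finset.mul_sum]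
  rw [h1, h2, key_stmt6]

/-- Defensive-forecasting guarantee in feature-map form, as an instance of the
GGM-style reduction with FTRL over the Euclidean ball: if the iterates `θ t`
satisfy the stated linear regret bound against the losses
`ℓ t = 𝔼_{p ∼ 𝒟ₜ}[Ψ(xₜ,p)(yₜ - p)]`, and each `𝒟ₜ` solves the EVI for the
operator `p ↦ Ψ(xₜ,p)ᵀ θₜ` to precision `ε t` with `∑ ε t ≤ 1`, then every test
`h_θ(x,p) = Ψ(x,p)ᵀθ` with `‖θ‖ ≤ B` has multicalibration error at most
`2B √(∑ ‖ℓ t‖²) + 1`. -/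
theorem stmt6 {d r T m : ℕ} {X : Type*}
    (Y : Set (Fin d → ℝ))
    (Ψ : X → (Fin d → ℝ) → Matrix (Fin r) (Fin d) ℝ)
    (B : ℝ) (hB : 0 < B)
    (w : Fin T → Fin m → ℝ) (P : Fin T → Fin m → (Fin d → ℝ))
    (hw0 : ∀ t j, 0 ≤ w t j) (hw1 : ∀ t, ∑ j, w t j = 1)
    (hP : ∀ t j, P t j ∈ Y)
    (x : Fin T → X) (y : Fin T → (Fin d → ℝ)) (hy : ∀ t, y t ∈ Y)
    (θseq : Fin T → (Fin r → ℝ)) (hθ : ∀ t, nrm (θseq t) ≤ B)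
    (ε : Fin T → ℝ) (hεsum : ∑ t, ε t ≤ 1)
    (hreg : ∀ θ : Fin r → ℝ, nrm θ ≤ B →
      (∑ t, (∑ j, w t j • (Ψ (x t) (P t j)).mulVec (y t - P t j)) ⬝ᵥ θ) -
      (∑ t, (∑ j, w t j • (Ψ (x t) (P t j)).mulVec (y t - P t j)) ⬝ᵥ θseq t) ≤
        2 * B * Real.sqrt (∑ t, nrm (∑ j, w t j • (Ψ (x t) (P t j)).mulVec (y t - P t j)) ^ 2))
    (hEVI : ∀ t, ∀ yy ∈ Y,
      ∑ j, w t j * ((Ψ (x t) (P t j)).transpose.mulVec (θseq t) ⬝ᵥ (yy - P t j)) ≤ ε t) :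
    ∀ θ : Fin r → ℝ, nrm θ ≤ B →
      ∑ t, ∑ j, w t j * ((Ψ (x t) (P t j)).transpose.mulVec θ ⬝ᵥ (y t - P t j)) ≤
        2 * B * Real.sqrt (∑ t, nrm (∑ j, w t j • (Ψ (x t) (P t j)).mulVec (y t - P t j)) ^ 2)
          + 1 := by
  intro θ hθB
  have hL : ∀ θ' : Fin r → ℝ,
      (∑ t, (∑ j, w t j • (Ψ (x t) (P t j)).mulVec (y t - P t j)) ⬝ᵥ θ') =
      ∑ t, ∑ j, w t j * ((Ψ (x t) (P t j)).transpose.mulVec θ' ⬝ᵥ (y t - P t j)) := by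
    intro θ'
    exact Finset.sum_congr rfl fun t _ => swap_stmt6 _ _ _ _
  have h2 : (∑ t, (∑ j, w t j • (Ψ (x t) (P t j)).mulVec (y t - P t j)) ⬝ᵥ θseq t) ≤ 1 := by
    calc (∑ t, (∑ j, w t j • (Ψ (x t) (P t j)).mulVec (y t - P t j)) ⬝ᵥ θseq t)
        = ∑ t, ∑ j, w t j * ((Ψ (x t) (P t j)).transpose.mulVec (θseq t) ⬝ᵥ (y t - P t j)) :=
          Finset.sum_congr rfl fun t _ => swap_stmt6 _ _ _ _
      _ ≤ ∑ t, ε t := Finset.sum_le_sum fun t _ => hEVI t (y t) (hy t)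
      _ ≤ 1 := hεsum
  have := hreg θ hθB
  rw [← hL θ]
  linarith
end

section
/- Let $k \geq 1$, $\Delta_k$ the probability simplex in $\mathbb{R}^k$, $\mathcal{Z}$ a set of actions, $\mathcal{L}$ a set of loss functions $\ell : \mathcal{Z} \times [k] \to \mathbb{R}_{\geq 0}$, and $\mathcal{C}$ a set of decision rules $c : \mathcal{X} \to \mathcal{Z}$. For $\ell \in \mathcal{L}$ let $\pi_\ell(p) \in \argmin_{z \in \mathcal{Z}} \sum_{i=1}^k \ell(z,i) p_i$ (assume it exists). Define $h_\ell(p) = (\ell(\pi_\ell(p),1),\dots,\ell(\pi_\ell(p),k)) \in \mathbb{R}^k$ and $h_{\ell,c}(x) = -(\ell(c(x),1),\dots,\ell(c(x),k)) \in \mathbb{R}^k$. Suppose finitely supported distributions $\mathcal{D}_t$ on $\Delta_k$, contexts $x_t$, and outcomes $y_t \in [k]$ (with one-hot encoding $\vec y_t$) satisfy: for all $\ell \in \mathcal{L}$ and $c \in \mathcal{C}$, $\sum_{t=1}^T \mathbb{E}_{p_t \sim \mathcal{D}_t}[h_\ell(p_t)^\top(\vec y_t - p_t)] \leq E$ and $\sum_{t=1}^T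 \mathbb{E}_{p_t \sim \mathcal{D}_t}[h_{\ell,c}(x_t)^\top(\vec y_t - p_t)] \leq E$. Then for every $\ell \in \mathcal{L}$ and $c \in \mathcal{C}$: $\sum_{t=1}^T \mathbb{E}_{p_t \sim \mathcal{D}_t}[\ell(\pi_\ell(p_t), y_t)] \leq \sum_{t=1}^T \ell(c(x_t), y_t) + 2E$. -/
open Finset

/-- Multicalibration with respect to the omniprediction test class implies
multiclass omniprediction: if the forecast distributions on the simplex `Δ_k`
pass the tests `h_ℓ` and `h_{ℓ,c}` up to error `E`, then best responding to the
forecasts has expected loss at most that of any decision rule `c ∈ 𝒞` plus `2E`. -/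
theorem stmt9 {k T m : ℕ} {X Z : Type*} (hk : 1 ≤ k)
    (Lset : Set (Z → Fin k → ℝ)) (hLpos : ∀ ℓ ∈ Lset, ∀ (z : Z) (i : Fin k), 0 ≤ ℓ z i)
    (Cset : Set (X → Z))
    (π : (Z → Fin k → ℝ) → (Fin k → ℝ) → Z)
    (hπ : ∀ ℓ ∈ Lset, ∀ (p : Fin k → ℝ) (z : Z),
      ∑ i, ℓ (π ℓ p) i * p i ≤ ∑ i, ℓ z i * p i)
    (w : Fin T → Fin m → ℝ) (P : Fin T → Fin m → (Fin k → ℝ))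
    (hw0 : ∀ t j, 0 ≤ w t j) (hw1 : ∀ t, ∑ j, w t j = 1)
    (hP : ∀ t j, (∀ i, 0 ≤ P t j i) ∧ ∑ i, P t j i = 1)
    (x : Fin T → X) (y : Fin T → Fin k)
    (E : ℝ)
    (hMC1 : ∀ ℓ ∈ Lset, ∑ t, ∑ j, w t j *
      (∑ i, ℓ (π ℓ (P t j)) i * ((if i = y t then (1 : ℝ) else 0) - P t j i)) ≤ E)
    (hMC2 : ∀ ℓ ∈ Lset, ∀ c ∈ Cset, ∑ t, ∑ j, w t j *
      (∑ i, (-(ℓ (c (x t)) i)) * ((if i = y t then (1 : ℝ) else 0) - P t j i)) ≤ E) :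
    ∀ ℓ ∈ Lset, ∀ c ∈ Cset,
      ∑ t, ∑ j, w t j * ℓ (π ℓ (P t j)) (y t) ≤ ∑ t, ℓ (c (x t)) (y t) + 2 * E := by
  intro ℓ hℓ c hc
  -- key pointwise identity: f (y t) = ∑ i, f i * (indicator - p) + ∑ i, f i * p i
  have key : ∀ (t : Fin T) (j : Fin m) (f : Fin k → ℝ),
      f (y t) = (∑ i, f i * ((if i = y t then (1:ℝ) else 0) - P t j i))
        + ∑ i, f i * P t j i := by
    intro t j f
    rw [← Finset.sum_add_distrib]
    have : ∀ i ∈ Finset.univ, f i * ((if i = y t then (1:ℝ) else 0) - P t j i)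
        + f i * P t j i = if i = y t then f i else 0 := by
      intro i _
      by_cases h : i = y t <;> simp [h] <;> ring
    rw [Finset.sum_congr rfl this, Finset.sum_ite_eq' Finset.univ (y t) f]
    simp
  have step1 : ∑ t, ∑ j, w t j * ℓ (π ℓ (P t j)) (y t)
      ≤ E + ∑ t, ∑ j, w t j * (∑ i, ℓ (c (x t)) i * P t j i) := by
    have expand : ∑ t, ∑ j, w t j * ℓ (π ℓ (P t j)) (y t)
        = (∑ t, ∑ j, w t j * (∑ i, ℓ (π ℓ (P t j)) i *
            ((if i = y t then (1:ℝ) else 0) - P t j i)))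
          + ∑ t, ∑ j, w t j * (∑ i, ℓ (π ℓ (P t j)) i * P t j i) := by
      rw [← Finset.sum_add_distrib]
      refine Finset.sum_congr rfl fun t _ => ?_
      rw [← Finset.sum_add_distrib]
      refine Finset.sum_congr rfl fun j _ => ?_
      rw [← mul_add, ← key t j]
    rw [expand]
    exact add_le_add (hMC1 ℓ hℓ)
      (Finset.sum_le_sum fun t _ => Finset.sum_le_sum fun j _ =>
        mul_le_mul_of_nonneg_left (hπ ℓ hℓ (P t j) (c (x t))) (hw0 t j))
  have step2 : ∑ t, ∑ j, w t j * (∑ i, ℓ (c (x t)) i * P t j i)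
      ≤ ∑ t, ℓ (c (x t)) (y t) + E := by
    have expand : ∑ t, ∑ j, w t j * (∑ i, ℓ (c (x t)) i * P t j i)
        = (∑ t, ∑ j, w t j * (∑ i, (-(ℓ (c (x t)) i)) *
            ((if i = y t then (1:ℝ) else 0) - P t j i)))
          + ∑ t, ∑ j, w t j * ℓ (c (x t)) (y t) := by
      rw [← Finset.sum_add_distrib]
      refine Finset.sum_congr rfl fun t _ => ?_
      rw [← Finset.sum_add_distrib]
      refine Finset.sum_congr rfl fun j _ => ?_
      rw [← mul_add]
      congr 1
      have := key t j (fun i => ℓ (c (x t)) i)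
      have neg : ∑ i, (-(ℓ (c (x t)) i)) * ((if i = y t then (1:ℝ) else 0) - P t j i)
          = -∑ i, ℓ (c (x t)) i * ((if i = y t then (1:ℝ) else 0) - P t j i) := by
        rw [← Finset.sum_neg_distrib]
        exact Finset.sum_congr rfl fun i _ => by ring
      rw [neg]
      linarith
    rw [expand]
    have const : ∑ t, ∑ j, w t j * ℓ (c (x t)) (y t) = ∑ t, ℓ (c (x t)) (y t) := by
      refine Finset.sum_congr rfl fun t _ => ?_
      rw [← Finset.sum_mul, hw1 t, one_mul]
    rw [const, add_comm]
    exact add_le_add_right (hMC2 ℓ hℓ c hc) _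
  linarith
end

section
/- Suppose an online gradient descent variant with delays achieves, against linear losses with gradients bounded in norm by $G$, regret at most $C \cdot G \sqrt{T + \sum_{t=1}^T d_t}$ over the unit Euclidean ball, where $d_t \geq 1$ are integer delays. Combined with the GGM-style reduction with EVI precisions $\epsilon_t = 1/\sqrt{t}$ (so $\sum_{t=1}^T \epsilon_t \leq 2\sqrt{T}$), the resulting forecaster satisfies, for every test $h_\theta(x,p) = \Psi(x,p)^\top\theta$ with $\|\theta\|_2 \leq 1$: $\sum_{t=1}^T \mathbb{E}_{p_t \sim \mathcal{D}_t}[h_\theta(x_t,p_t)^\top(y_t - p_t)] \leq C \cdot G\sqrt{T + \sum_{t=1}^T d_t} + 2\sqrt{T}$, where $G = \max_t \|\mathbb{E}_{p_t \sim \mathcal{D}_t}[\Psi(x_t,p_t)(y_t - p_t)]\|_2$. In particular, if $\sum_{t=1}^T d_t = o(T^2)$, the multicalibration error is $o(T)$. -/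
open Finset Matrix

lemma stmt19_sum_dot {r m : ℕ} (f : Fin m → (Fin r → ℝ)) (η : Fin r → ℝ) :
    (∑ j, f j) ⬝ᵥ η = ∑ j, f j ⬝ᵥ η := by
  simp only [dotProduct, Finset.sum_apply, Finset.sum_mul]
  rw [Finset.sum_comm]

lemma stmt19_key_id {d r m : ℕ} (w : Fin m → ℝ) (A : Fin m → Matrix (Fin r) (Fin d) ℝ)
    (v : Fin m → (Fin d → ℝ)) (η : Fin r → ℝ) :
    ∑ j, w j * ((A j).transpose.mulVec η ⬝ᵥ v j) =
    (∑ j, w j • (A j).mulVec (v j)) ⬝ᵥ η := by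
  rw [stmt19_sum_dot]
  apply Finset.sum_congr rfl
  intro j _
  rw [smul_dotProduct, smul_eq_mul, Matrix.mulVec_transpose,
    dotProduct_comm ((A j).mulVec (v j)) η, Matrix.dotProduct_mulVec]

lemma stmt19_sum_inv_sqrt (T : ℕ) :
    ∑ t ∈ Finset.range T, 1 / Real.sqrt (t + 1) ≤ 2 * Real.sqrt T := by
  induction T with
  | zero => simp
  | succ n ih =>
    rw [Finset.sum_range_succ]
    have h1 : Real.sqrt (n + 1) > 0 := Real.sqrt_pos.2 (by positivity)
    have h3 : Real.sqrt (n + 1) ^ 2 = (n : ℝ) + 1 := Real.sq_sqrt (by positivity)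
    have h4 : Real.sqrt (n : ℝ) ^ 2 = (n : ℝ) := Real.sq_sqrt (by positivity)
    have key : 1 / Real.sqrt ((n : ℝ) + 1) ≤
        2 * Real.sqrt ((n : ℝ) + 1) - 2 * Real.sqrt (n : ℝ) := by
      rw [div_le_iff₀ h1]
      nlinarith [Real.sqrt_le_sqrt (show (n : ℝ) ≤ n + 1 by linarith)]
    push_cast
    linarith [ih]

/-- Online multicalibration with delayed observations: plugging a
delayed-feedback online gradient descent (regret `C·G·√(T + ∑ dₜ)` over the
unit ball against linear losses with gradient norms ≤ G) into the GGM-style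
reduction with EVI precisions `εₜ = 1/√t` (so `∑ εₜ ≤ 2√T`) yields, for every
test `h_θ(x,p) = Ψ(x,p)ᵀθ` with `‖θ‖ ≤ 1`, multicalibration error at most
`C·G·√(T + ∑ dₜ) + 2√T`, where `G` bounds `‖𝔼_{pₜ∼𝒟ₜ}[Ψ(xₜ,pₜ)(yₜ-pₜ)]‖`. -/
theorem stmt19 {d r T m : ℕ} {X : Type*} (hT : 1 ≤ T)
    (C G : ℝ) (hC : 0 < C) (hG : 0 ≤ G)
    (Y : Set (Fin d → ℝ))
    (Ψ : X → (Fin d → ℝ) → Matrix (Fin r) (Fin d) ℝ)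
    (delays : Fin T → ℕ) (hdel : ∀ t, 1 ≤ delays t)
    (w : Fin T → Fin m → ℝ) (hw0 : ∀ t j, 0 ≤ w t j) (hw1 : ∀ t, ∑ j, w t j = 1)
    (P : Fin T → Fin m → (Fin d → ℝ)) (hP : ∀ t j, P t j ∈ Y)
    (x : Fin T → X) (y : Fin T → (Fin d → ℝ)) (hy : ∀ t, y t ∈ Y)
    (θseq : Fin T → (Fin r → ℝ))
    (hGmax : ∀ t, nrm (∑ j, w t j • (Ψ (x t) (P t j)).mulVec (y t - P t j)) ≤ G)
    (hreg : ∀ θ : Fin r → ℝ, nrm θ ≤ 1 →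
      (∑ t, (∑ j, w t j • (Ψ (x t) (P t j)).mulVec (y t - P t j)) ⬝ᵥ θ) -
      (∑ t, (∑ j, w t j • (Ψ (x t) (P t j)).mulVec (y t - P t j)) ⬝ᵥ θseq t) ≤
        C * G * Real.sqrt ((T : ℝ) + ∑ t, (delays t : ℝ)))
    (hEVI : ∀ t : Fin T, ∀ yy ∈ Y,
      ∑ j, w t j * ((Ψ (x t) (P t j)).transpose.mulVec (θseq t) ⬝ᵥ (yy - P t j)) ≤
        1 / Real.sqrt (((t : ℕ) + 1 : ℝ))) :
    ∀ θ : Fin r → ℝ, nrm θ ≤ 1 →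
      ∑ t, ∑ j, w t j * ((Ψ (x t) (P t j)).transpose.mulVec θ ⬝ᵥ (y t - P t j)) ≤
        C * G * Real.sqrt ((T : ℝ) + ∑ t, (delays t : ℝ)) + 2 * Real.sqrt T := by
  intro θ hθ
  -- per-round identity
  have hid : ∀ (η : Fin r → ℝ) (t : Fin T),
      ∑ j, w t j * ((Ψ (x t) (P t j)).transpose.mulVec η ⬝ᵥ (y t - P t j)) =
      (∑ j, w t j • (Ψ (x t) (P t j)).mulVec (y t - P t j)) ⬝ᵥ η := by
    intro η t
    exact stmt19_key_id (w t) (fun j => Ψ (x t) (P t j)) (fun j => y t - P t j) η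
  have hEVI' : ∀ t : Fin T,
      (∑ j, w t j • (Ψ (x t) (P t j)).mulVec (y t - P t j)) ⬝ᵥ θseq t ≤
        1 / Real.sqrt (((t : ℕ) + 1 : ℝ)) := by
    intro t
    rw [← hid]
    exact hEVI t (y t) (hy t)
  have hsum : (∑ t : Fin T, (1 : ℝ) / Real.sqrt (((t : ℕ) + 1 : ℝ))) ≤ 2 * Real.sqrt T := by
    rw [Fin.sum_univ_eq_sum_range (fun t => (1 : ℝ) / Real.sqrt ((t : ℝ) + 1))]
    exact stmt19_sum_inv_sqrt T
  calc ∑ t, ∑ j, w t j * ((Ψ (x t) (P t j)).transpose.mulVec θ ⬝ᵥ (y t - P t j))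
      = ∑ t, (∑ j, w t j • (Ψ (x t) (P t j)).mulVec (y t - P t j)) ⬝ᵥ θ := by
        exact Finset.sum_congr rfl fun t _ => hid θ t
    _ ≤ (∑ t, (∑ j, w t j • (Ψ (x t) (P t j)).mulVec (y t - P t j)) ⬝ᵥ θseq t) +
        C * G * Real.sqrt ((T : ℝ) + ∑ t, (delays t : ℝ)) := by
        linarith [hreg θ hθ]
    _ ≤ (∑ t : Fin T, 1 / Real.sqrt (((t : ℕ) + 1 : ℝ))) +
        C * G * Real.sqrt ((T : ℝ) + ∑ t, (delays t : ℝ)) := by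
        gcongr with t _
        exact hEVI' t
    _ ≤ C * G * Real.sqrt ((T : ℝ) + ∑ t, (delays t : ℝ)) + 2 * Real.sqrt T := by
        linarith [hsum]
end
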